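/- Under the setup of the generalized beta k-function of the first kind with Kummer's transformation (n ≥ 2, k > 0, a > 0, b − a > 0, η > 0, ζ ≥ 0, φ ∈ (0,∞)^n), one has β_{ζ,k}^{(a,b)}(φ; η) ≥ β_k(φ; η) · e^{−ζ^k/(η^k n^n)} · ₁F_{1,k}(b − a; b; η^k n^n / k), where β_k(φ; η) = (1/k^{n−1}) ∫_{E_{n-1}} ∏_i t_i^{φ_i/k−1} e^{−η^k/(kπ(t))} dt. -/

import Mathlib

open MeasureTheory Real Set

noncomputable section

/-- Open standard (n-1)-simplex in ℝ^{n-1}. -/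
def simplexInt (n : ℕ) : Set (Fin (n-1) → ℝ) :=
  {t | (∀ i, 0 < t i) ∧ ∑ i, t i < 1}

/-- Barycentric coordinates: `t_1, …, t_{n-1}` and `t_n = 1 - ∑_{i<n} t_i`. -/
def bary (n : ℕ) (t : Fin (n-1) → ℝ) (i : Fin n) : ℝ :=
  if h : (i : ℕ) < n - 1 then t ⟨i, h⟩ else 1 - ∑ j, t j

/-- Product of the n barycentric coordinates. -/
def piT (n : ℕ) (t : Fin (n-1) → ℝ) : ℝ := ∏ i : Fin n, bary n t i

/-- Euler-integral confluent hypergeometric k-function ₁F_{1,k}(a;b;l). -/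
def F1k (k a b l : ℝ) : ℝ :=
  (1/k) * (Real.Gamma b / (Real.Gamma a * Real.Gamma (b-a))) *
    ∫ u in Set.Ioo (0:ℝ) 1, u ^ (a/k - 1) * (1-u) ^ ((b-a)/k - 1) * Real.exp (l*u)

/-- Beta k-function of n variables. -/
def betaK (n : ℕ) (k : ℝ) (φ : Fin n → ℝ) : ℝ :=
  (1/k^(n-1)) * ∫ t in simplexInt n, ∏ i, bary n t i ^ (φ i / k - 1)

/-- Extended beta k-function β_k(φ; η). -/
def betaKe (n : ℕ) (k : ℝ) (φ : Fin n → ℝ) (η : ℝ) : ℝ :=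
  (1/k^(n-1)) * ∫ t in simplexInt n,
    (∏ i, bary n t i ^ (φ i / k - 1)) * Real.exp (-(η^k)/(k * piT n t))

/-- Generalized beta k-function of the first kind. -/
def betaFirst (n : ℕ) (k a b η ζ : ℝ) (φ : Fin n → ℝ) : ℝ :=
  (1/k^(n-1)) * ∫ t in simplexInt n,
    (∏ i, bary n t i ^ (φ i / k - 1)) *
      F1k k a b (-(η^k)/(k * piT n t) - ζ^k * piT n t / η^k)

/-- Generalized beta k-function of the second kind. -/
def betaSecond (n : ℕ) (k : ℝ) (p q η ζ φ : Fin n → ℝ) : ℝ :=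
  (1/k^(n-1)) * ∫ t in simplexInt n,
    ∏ i, (bary n t i ^ (φ i / k - 1) *
      F1k k (p i) (q i) (-((η i)^k)/(k * bary n t i) - (ζ i)^k * bary n t i / (η i)^k))

/-- Extended beta k-function of the second kind (vector η). -/
def betaKe2 (n : ℕ) (k : ℝ) (φ η : Fin n → ℝ) : ℝ :=
  (1/k^(n-1)) * ∫ t in simplexInt n,
    ∏ i, (bary n t i ^ (φ i / k - 1) * Real.exp (-((η i)^k)/(k * bary n t i)))

/-!
By Kummer's transformation the integrand of `betaFirst` is
`∏ tᵢ^(φᵢ/k-1) · e^(-η^k/(kπ)) · e^(-ζ^k π/η^k) · ₁F_{1,k}(b-a; b; η^k/(kπ) + ζ^k π/η^k)`,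
where `π = piT n t`. On the simplex AM-GM gives `π ≤ n^(-n)`; this bounds the third factor
below by `e^(-ζ^k/(η^k n^n))` and, `₁F_{1,k}(b-a; b; ·)` being increasing, the last one by
`₁F_{1,k}(b-a; b; η^k n^n/k)`. Integrating gives the claim. The integrals are not junk values:
the integrand is dominated by `∏ tᵢ^(φᵢ/k-1)`, which is integrable on the simplex by
induction on the dimension (Fubini over the last coordinate, whose fibre integral is a rescaled
beta integral).
-/

lemma integrableOn_rpow_mul_one_sub_rpow {d e : ℝ} (hd : -1 < d) (he : -1 < e) :
    IntegrableOn (fun u : ℝ => u ^ d * (1 - u) ^ e) (Ioo 0 1) := by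
  have h := (Complex.betaIntegral_convergent (u := d + 1) (v := e + 1)
    (by simp; linarith) (by simp; linarith)).norm
  rw [intervalIntegrable_iff_integrableOn_Ioo_of_le zero_le_one] at h
  refine h.congr_fun (fun u hu => ?_) measurableSet_Ioo
  have h1u : (1 : ℂ) - u = ((1 - u : ℝ) : ℂ) := by push_cast; ring
  simp only [norm_mul, h1u, Complex.norm_cpow_eq_rpow_re_of_pos hu.1,
    Complex.norm_cpow_eq_rpow_re_of_pos (sub_pos.2 hu.2)]
  simp

lemma rpow_mul_sub_rpow_eq {d e r x : ℝ} (hr : 0 < r) (hx : x ∈ Icc 0 r) :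
    x ^ d * (r - x) ^ e = r ^ (d + e) * ((r⁻¹ * x) ^ d * (1 - r⁻¹ * x) ^ e) := by
  have hx' : r⁻¹ * x ≤ 1 := by rw [inv_mul_le_iff₀ hr]; linarith [hx.2]
  rw [rpow_add hr, mul_mul_mul_comm, ← mul_rpow hr.le (by positivity [hx.1]),
    ← mul_rpow hr.le (by linarith), mul_inv_cancel_left₀ hr.ne', mul_sub, mul_one,
    mul_inv_cancel_left₀ hr.ne']

lemma integrableOn_rpow_mul_sub_rpow {d e : ℝ} (hd : -1 < d) (he : -1 < e) (r : ℝ) :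
    IntegrableOn (fun x : ℝ => x ^ d * (r - x) ^ e) (Ioo 0 r) := by
  rcases le_or_gt r 0 with hr | hr
  · simp [Ioo_eq_empty_of_le hr]
  have h := ((intervalIntegrable_iff_integrableOn_Ioo_of_le zero_le_one).2
    (integrableOn_rpow_mul_one_sub_rpow hd he)).comp_mul_left (c := r⁻¹)
  rw [zero_div, one_div, inv_inv, intervalIntegrable_iff_integrableOn_Ioo_of_le hr.le] at h
  exact IntegrableOn.congr_fun (h.const_mul (r ^ (d + e)))
    (fun x hx => (rpow_mul_sub_rpow_eq hr (Ioo_subset_Icc_self hx)).symm) measurableSet_Ioo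

lemma integral_rpow_mul_sub_rpow (d e : ℝ) {r : ℝ} (hr : 0 < r) :
    ∫ x in Ioo 0 r, x ^ d * (r - x) ^ e
      = r ^ (d + e + 1) * ∫ u in Ioo 0 1, u ^ d * (1 - u) ^ e := by
  have hscale := intervalIntegral.integral_comp_mul_left (a := 0) (b := r)
    (fun u : ℝ => u ^ d * (1 - u) ^ e) (inv_ne_zero hr.ne')
  rw [mul_zero, inv_mul_cancel₀ hr.ne', inv_inv, smul_eq_mul] at hscale
  rw [← integral_Ioc_eq_integral_Ioo, ← integral_Ioc_eq_integral_Ioo,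
    ← intervalIntegral.integral_of_le hr.le, ← intervalIntegral.integral_of_le zero_le_one,
    intervalIntegral.integral_congr (g := fun x => r ^ (d + e) * ((r⁻¹ * x) ^ d * (1 - r⁻¹ * x) ^ e))
      (fun x hx => rpow_mul_sub_rpow_eq hr (by rwa [uIcc_of_le hr.le] at hx)),
    intervalIntegral.integral_const_mul, hscale, rpow_add_one hr.ne', mul_assoc]

/-- `simplexInt (m + 1)` unfolds to `openSimplex m`, whose points have `m` rather than
`m + 1 - 1` coordinates. -/
def openSimplex (m : ℕ) : Set (Fin m → ℝ) := {t | (∀ i, 0 < t i) ∧ ∑ i, t i < 1}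

lemma measurableSet_openSimplex (m : ℕ) : MeasurableSet (openSimplex m) := by
  rw [openSimplex, ofPred_and, ofPred_forall]
  exact ((isOpen_iInter_of_finite fun i => isOpen_lt continuous_const (continuous_apply i)).inter
    (isOpen_lt (continuous_finsetSum _ fun i _ => continuous_apply i) continuous_const)).measurableSet

lemma snoc_mem_openSimplex_iff {m : ℕ} (y : Fin m → ℝ) (x : ℝ) :
    (Fin.snoc y x : Fin (m + 1) → ℝ) ∈ openSimplex (m + 1) ↔
      y ∈ openSimplex m ∧ x ∈ Ioo 0 (1 - ∑ j, y j) := by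
  simp only [openSimplex, mem_ofPred_eq, Fin.forall_fin_succ', Fin.snoc_castSucc, Fin.snoc_last,
    Fin.sum_univ_castSucc, mem_Ioo]
  constructor
  · rintro ⟨⟨hy, hx⟩, hs⟩
    have : 0 ≤ ∑ j, y j := Finset.sum_nonneg fun j _ => (hy j).le
    exact ⟨⟨hy, by linarith⟩, hx, by linarith⟩
  · rintro ⟨⟨hy, -⟩, hx, hs⟩
    exact ⟨⟨hy, hx⟩, by linarith⟩

def dirichletDensity {m : ℕ} (d : Fin m → ℝ) (e : ℝ) (t : Fin m → ℝ) : ℝ :=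
  (∏ i, t i ^ d i) * (1 - ∑ i, t i) ^ e

lemma indicator_dirichletDensity_snoc {m : ℕ} (d : Fin (m + 1) → ℝ) (e : ℝ)
    (y : Fin m → ℝ) (x : ℝ) :
    (openSimplex (m + 1)).indicator (dirichletDensity d e) (Fin.snoc y x) =
      (openSimplex m).indicator (fun y => ∏ j, y j ^ Fin.init d j) y *
        (Ioo 0 (1 - ∑ j, y j)).indicator
          (fun x => x ^ d (Fin.last m) * ((1 - ∑ j, y j) - x) ^ e) x := by
  by_cases hxy : y ∈ openSimplex m ∧ x ∈ Ioo 0 (1 - ∑ j, y j)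
  · rw [indicator_of_mem ((snoc_mem_openSimplex_iff y x).2 hxy), indicator_of_mem hxy.1,
      indicator_of_mem hxy.2, dirichletDensity, Fin.prod_univ_castSucc, Fin.sum_univ_castSucc]
    simp only [Fin.snoc_castSucc, Fin.snoc_last, Fin.init]
    rw [sub_add_eq_sub_sub, mul_assoc]
  · rw [indicator_of_notMem (mt (snoc_mem_openSimplex_iff y x).1 hxy)]
    rcases not_and_or.1 hxy with hy | hx
    · rw [indicator_of_notMem hy, zero_mul]
    · rw [indicator_of_notMem hx, mul_zero]

lemma integral_norm_indicator_dirichletDensity_snoc {m : ℕ} (d : Fin (m + 1) → ℝ) (e : ℝ)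
    (y : Fin m → ℝ) :
    ∫ x, ‖(openSimplex (m + 1)).indicator (dirichletDensity d e) (Fin.snoc y x)‖ =
      (openSimplex m).indicator (fun y => (∫ u in Ioo 0 1, u ^ d (Fin.last m) * (1 - u) ^ e) *
        dirichletDensity (Fin.init d) (d (Fin.last m) + e + 1) y) y := by
  simp_rw [indicator_dirichletDensity_snoc]
  by_cases hy : y ∈ openSimplex m
  · have hr : 0 < 1 - ∑ j, y j := sub_pos.2 hy.2
    have hprod : 0 ≤ ∏ j, y j ^ Fin.init d j :=
      Finset.prod_nonneg fun j _ => rpow_nonneg (hy.1 j).le _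
    simp only [indicator_of_mem hy, norm_mul, norm_indicator_eq_indicator_norm]
    rw [integral_const_mul, integral_indicator measurableSet_Ioo,
      setIntegral_congr_fun measurableSet_Ioo fun x hx => by
        rw [← norm_mul, Real.norm_of_nonneg (by have := hx.1; have := hx.2; positivity)],
      integral_rpow_mul_sub_rpow _ _ hr, Real.norm_of_nonneg hprod, dirichletDensity]
    ring
  · simp [indicator_of_notMem hy]

lemma integrableOn_dirichletDensity : ∀ {m : ℕ} {d : Fin m → ℝ} {e : ℝ},
    (∀ i, -1 < d i) → -1 < e → IntegrableOn (dirichletDensity d e) (openSimplex m)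
  | 0, d, e, _, _ => by unfold dirichletDensity; simp
  | m + 1, d, e, hd, he => by
    set E := MeasurableEquiv.piFinSuccAbove (fun _ : Fin (m + 1) => ℝ) (Fin.last m)
    have hE : MeasurePreserving E.symm := (volume_preserving_piFinSuccAbove _ _).symm E
    have hsnoc : ∀ x y, E.symm (x, y) = Fin.snoc y x := fun x y => Fin.insertNth_last' x y
    have hS := measurableSet_openSimplex (m + 1)
    rw [← hE.integrableOn_comp_preimage E.symm.measurableEmbedding,
      ← integrable_indicator_iff (E.symm.measurable hS), Measure.volume_eq_prod,
      integrable_prod_iff' ((Measurable.indicator (by unfold dirichletDensity; fun_prop)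
        (E.symm.measurable hS)).aestronglyMeasurable)]
    simp only [indicator_comp_right, hsnoc, integral_norm_indicator_dirichletDensity_snoc]
    refine ⟨Filter.Eventually.of_forall fun y => ?_,
      (integrable_indicator_iff (measurableSet_openSimplex m)).2
        ((integrableOn_dirichletDensity (fun j => hd j.castSucc)
          (by linarith [hd (Fin.last m)])).const_mul _)⟩
    simp only [indicator_dirichletDensity_snoc]
    exact ((integrable_indicator_iff measurableSet_Ioo).2
      (integrableOn_rpow_mul_sub_rpow (hd _) he _)).const_mul _

lemma prod_mul_card_pow_le_one {ι : Type*} [Fintype ι] {z : ι → ℝ} (hz : ∀ i, 0 ≤ z i)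
    (hsum : ∑ i, z i = 1) : (∏ i, z i) * (Fintype.card ι : ℝ) ^ Fintype.card ι ≤ 1 := by
  have hn : 0 < Fintype.card ι := by
    rcases isEmpty_or_nonempty ι with hι | hι
    · simp at hsum
    · exact Fintype.card_pos
  have hcard : (0 : ℝ) < Fintype.card ι := by exact_mod_cast hn
  have hP : 0 ≤ ∏ i, z i := Finset.prod_nonneg fun i _ => hz i
  have hgm := geom_mean_le_arith_mean Finset.univ (fun _ => 1) z (fun _ _ => zero_le_one)
    (by simpa using hcard) (fun i _ => hz i)
  simp only [rpow_one, one_mul, hsum, Finset.sum_const, Finset.card_univ, nsmul_eq_mul,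
    mul_one] at hgm
  calc (∏ i, z i) * (Fintype.card ι : ℝ) ^ Fintype.card ι
      = ((∏ i, z i) ^ (Fintype.card ι : ℝ)⁻¹ * Fintype.card ι) ^ Fintype.card ι := by
        rw [mul_pow, rpow_inv_natCast_pow hP hn.ne']
    _ ≤ (1 / Fintype.card ι * Fintype.card ι) ^ Fintype.card ι := by gcongr
    _ = 1 := by rw [one_div_mul_cancel hcard.ne', one_pow]

lemma bary_castSucc {m : ℕ} (t : Fin m → ℝ) (j : Fin m) : bary (m + 1) t j.castSucc = t j := by
  rw [bary, dif_pos (by simp)]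
  rfl

lemma bary_last {m : ℕ} (t : Fin m → ℝ) : bary (m + 1) t (Fin.last m) = 1 - ∑ j, t j := by
  rw [bary, dif_neg (by simp)]
  rfl

lemma sum_bary {m : ℕ} (t : Fin m → ℝ) : ∑ i, bary (m + 1) t i = 1 := by
  simp only [Fin.sum_univ_castSucc, bary_castSucc, bary_last]
  ring

lemma bary_pos {m : ℕ} {t : Fin m → ℝ} (ht : t ∈ openSimplex m) (i : Fin (m + 1)) :
    0 < bary (m + 1) t i := by
  induction i using Fin.lastCases with
  | last => rw [bary_last]; linarith [ht.2]
  | cast j => rw [bary_castSucc]; exact ht.1 j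

lemma piT_pos {m : ℕ} {t : Fin m → ℝ} (ht : t ∈ openSimplex m) : 0 < piT (m + 1) t :=
  Finset.prod_pos fun i _ => bary_pos ht i

lemma piT_mul_pow_le_one {m : ℕ} {t : Fin m → ℝ} (ht : t ∈ openSimplex m) :
    piT (m + 1) t * ((m + 1 : ℕ) : ℝ) ^ (m + 1) ≤ 1 := by
  simpa [piT] using prod_mul_card_pow_le_one (fun i => (bary_pos ht i).le) (sum_bary t)

lemma prod_bary_rpow_nonneg {m : ℕ} {t : Fin m → ℝ} (ht : t ∈ openSimplex m)
    (α : Fin (m + 1) → ℝ) : 0 ≤ ∏ i, bary (m + 1) t i ^ α i :=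
  Finset.prod_nonneg fun i _ => rpow_nonneg (bary_pos ht i).le _

lemma measurable_piT (n : ℕ) : Measurable (piT n) := by
  refine Finset.measurable_prod _ fun i _ => ?_
  unfold bary
  split_ifs <;> fun_prop

lemma integrableOn_prod_bary_rpow {m : ℕ} {α : Fin (m + 1) → ℝ} (hα : ∀ i, -1 < α i) :
    IntegrableOn (fun t : Fin m → ℝ => ∏ i, bary (m + 1) t i ^ α i) (openSimplex m) := by
  simp only [Fin.prod_univ_castSucc, bary_castSucc, bary_last]
  exact integrableOn_dirichletDensity (fun j => hα j.castSucc) (hα (Fin.last m))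

lemma integrableOn_F1k_integrand {p q : ℝ} (hp : -1 < p) (hq : -1 < q) (l : ℝ) :
    IntegrableOn (fun u : ℝ => u ^ p * (1 - u) ^ q * exp (l * u)) (Ioo 0 1) :=
  (integrableOn_rpow_mul_one_sub_rpow hp hq).mul_continuousOn_of_subset (by fun_prop)
    measurableSet_Ioo isCompact_Icc Ioo_subset_Icc_self

lemma integral_F1k_integrand_neg (p q l : ℝ) :
    ∫ u in Ioo 0 1, u ^ p * (1 - u) ^ q * exp (-l * u)
      = exp (-l) * ∫ u in Ioo 0 1, u ^ q * (1 - u) ^ p * exp (l * u) := by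
  rw [← integral_Ioc_eq_integral_Ioo, ← integral_Ioc_eq_integral_Ioo,
    ← intervalIntegral.integral_of_le zero_le_one, ← intervalIntegral.integral_of_le zero_le_one,
    ← intervalIntegral.integral_const_mul]
  have hreflect := intervalIntegral.integral_comp_sub_left (a := 0) (b := 1)
    (fun u : ℝ => exp (-l) * (u ^ q * (1 - u) ^ p * exp (l * u))) 1
  rw [sub_zero, sub_self] at hreflect
  rw [← hreflect]
  refine intervalIntegral.integral_congr fun u _ => ?_
  rw [sub_sub_cancel, show -l * u = l * (1 - u) + -l by ring, exp_add]
  ring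

/-- Kummer's transformation. -/
lemma F1k_neg (k a b l : ℝ) : F1k k a b (-l) = exp (-l) * F1k k (b - a) b l := by
  simp only [F1k, sub_sub_cancel, integral_F1k_integrand_neg]
  ring

section F1k

variable {k a b : ℝ}

lemma F1k_prefactor_nonneg (hk : 0 < k) (ha : 0 < a) (hab : 0 < b - a) :
    0 ≤ 1 / k * (Gamma b / (Gamma a * Gamma (b - a))) := by
  have := Gamma_pos_of_pos (ha.trans (sub_pos.1 hab))
  have := Gamma_pos_of_pos ha
  have := Gamma_pos_of_pos hab
  positivity

lemma F1k_nonneg (hk : 0 < k) (ha : 0 < a) (hab : 0 < b - a) (l : ℝ) : 0 ≤ F1k k a b l :=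
  mul_nonneg (F1k_prefactor_nonneg hk ha hab) <| setIntegral_nonneg measurableSet_Ioo
    fun u hu => by have := sub_pos.2 hu.2; have := hu.1; positivity

lemma F1k_monotone (hk : 0 < k) (ha : 0 < a) (hab : 0 < b - a) : Monotone (F1k k a b) := by
  intro l₁ l₂ hl
  have hp : -1 < a / k - 1 := by linarith [div_pos ha hk]
  have hq : -1 < (b - a) / k - 1 := by linarith [div_pos hab hk]
  refine mul_le_mul_of_nonneg_left (setIntegral_mono_on (integrableOn_F1k_integrand hp hq l₁)
    (integrableOn_F1k_integrand hp hq l₂) measurableSet_Ioo fun u hu => ?_)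
    (F1k_prefactor_nonneg hk ha hab)
  have := sub_pos.2 hu.2
  have := hu.1
  gcongr

lemma exp_mul_F1k_le_F1k (hk : 0 < k) (ha : 0 < a) (hab : 0 < b - a) {c d x N : ℝ}
    (hc : 0 < c) (hd : 0 ≤ d) (hx : 0 < x) (hN : 0 < N) (hxN : x * N ≤ 1) :
    exp (-c / (k * x)) * (exp (-d / (c * N)) * F1k k (b - a) b (c * N / k)) ≤
      F1k k a b (-c / (k * x) - d * x / c) := by
  have hkummer : F1k k a b (-c / (k * x) - d * x / c) = exp (-c / (k * x)) *
      (exp (-(d * x / c)) * F1k k (b - a) b (c / (k * x) + d * x / c)) := by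
    rw [show -c / (k * x) - d * x / c = -(c / (k * x) + d * x / c) by ring, F1k_neg, neg_add,
      exp_add, neg_div, mul_assoc]
  have hba : 0 < b - (b - a) := by rwa [sub_sub_cancel]
  have hexp : -d / (c * N) ≤ -(d * x / c) := by
    rw [neg_div, neg_le_neg_iff, div_le_div_iff₀ hc (mul_pos hc hN)]
    nlinarith [mul_nonneg hd hc.le]
  have harg : c * N / k ≤ c / (k * x) + d * x / c := by
    have : c * N / k ≤ c / (k * x) := by
      rw [div_le_div_iff₀ hk (mul_pos hk hx)]
      nlinarith [mul_pos hc hk]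
    linarith [div_nonneg (mul_nonneg hd hx.le) hc.le]
  rw [hkummer]
  exact mul_le_mul_of_nonneg_left (mul_le_mul (exp_le_exp.2 hexp) (F1k_monotone hk hab hba harg)
    (F1k_nonneg hk hab hba _) (exp_pos _).le) (exp_pos _).le

lemma integrableOn_betaFirst_integrand {m : ℕ} (hk : 0 < k) (ha : 0 < a) (hab : 0 < b - a)
    {c d : ℝ} (hc : 0 < c) (hd : 0 ≤ d) {φ : Fin (m + 1) → ℝ} (hφ : ∀ i, 0 < φ i) :
    IntegrableOn (fun t => (∏ i, bary (m + 1) t i ^ (φ i / k - 1)) *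
      F1k k a b (-c / (k * piT (m + 1) t) - d * piT (m + 1) t / c)) (openSimplex m) := by
  have hP := integrableOn_prod_bary_rpow (α := fun i => φ i / k - 1) fun i => by
    linarith [div_pos (hφ i) hk]
  refine hP.mul_bdd (c := F1k k a b 0)
    (((F1k_monotone hk ha hab).measurable.comp ?_).aestronglyMeasurable)
    (ae_restrict_of_forall_mem (measurableSet_openSimplex m) fun t ht => ?_)
  · have := measurable_piT (m + 1)
    fun_prop
  · have hπ := piT_pos ht
    rw [Real.norm_of_nonneg (F1k_nonneg hk ha hab _)]
    refine F1k_monotone hk ha hab ?_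
    have : 0 ≤ c / (k * piT (m + 1) t) := by positivity
    have : 0 ≤ d * piT (m + 1) t / c := by positivity
    linarith [neg_div (k * piT (m + 1) t) c]

end F1k

theorem stmt12 (n : ℕ) (hn : 2 ≤ n) (k a b η ζ : ℝ) (hk : 0 < k) (ha : 0 < a)
    (hab : 0 < b - a) (hη : 0 < η) (hζ : 0 ≤ ζ)
    (φ : Fin n → ℝ) (hφ : ∀ i, 0 < φ i) :
    betaKe n k φ η * Real.exp (-(ζ^k) / (η^k * (n:ℝ)^n)) *
        F1k k (b - a) b (η^k * (n:ℝ)^n / k) ≤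
      betaFirst n k a b η ζ φ := by
  obtain ⟨m, rfl⟩ : ∃ m, n = m + 1 := ⟨n - 1, by omega⟩
  have hηk : 0 < η ^ k := rpow_pos_of_pos hη k
  have hF1k : 0 ≤ F1k k (b - a) b (η ^ k * ((m + 1 : ℕ) : ℝ) ^ (m + 1) / k) :=
    F1k_nonneg hk hab (by rwa [sub_sub_cancel]) _
  rw [betaKe, betaFirst, mul_assoc, mul_assoc, ← integral_mul_const]
  refine mul_le_mul_of_nonneg_left (integral_mono_of_nonneg ?_
    (integrableOn_betaFirst_integrand hk ha hab hηk (rpow_nonneg hζ k) hφ) ?_) (by positivity)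
  · filter_upwards [ae_restrict_mem (measurableSet_openSimplex m)] with t ht
    have := prod_bary_rpow_nonneg ht (fun i => φ i / k - 1)
    positivity
  · filter_upwards [ae_restrict_mem (measurableSet_openSimplex m)] with t ht
    rw [mul_assoc]
    exact mul_le_mul_of_nonneg_left (exp_mul_F1k_le_F1k hk ha hab hηk (rpow_nonneg hζ k)
      (piT_pos ht) (by positivity) (piT_mul_pow_le_one ht)) (prod_bary_rpow_nonneg ht _)
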